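/- Let M be a flow relation on Z = U ∪ V. Define toFlow back from the structure: for the partial order on mutual-flow equivalence classes of V (with [v] ≤ [w] iff (v,w) ∈ M) together with singleton classes {u} for u ∈ U ordered by {u} ≤ [v] iff (u,v) ∈ M, the union of all pairs z ∈ L, z' ∈ L' over related classes (L, L') with L' ⊆ V recovers exactly M. That is, toFlow(toLabels(M)) = M. -/
import Mathlib


/-- `toFlow(toLabels(M)) = M`.  For a flow relation `M` on
`Z = U ∪ V`, take as labels the mutual-flow equivalence classes of `V` together
with the singletons `{u}` for `u ∈ U`, related by `L ⊑ L' ↔ L × L' ⊆ M`.  Then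
the derived flow relation `{(z, z') | ∃ (L, L') ∈ ⊑, z ∈ L, z' ∈ L' ∩ V}`
recovers exactly `M`. -/
theorem toFlow_toLabels_eq_self {α : Type*} (U V : Set α)
    (M : α → α → Prop)
    (hdisj : Disjoint U V)
    (hdom : ∀ a b, M a b → a ∈ U ∪ V ∧ b ∈ V)
    (htrans : ∀ a b c, M a b → M b c → M a c)
    (hrefl : ∀ v ∈ V, M v v) :
    ∀ z z',
      (∃ L ∈ {L : Set α | (∃ v ∈ V, L = {w | w ∈ V ∧ M v w ∧ M w v}) ∨
                            ∃ u ∈ U, L = {u}},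
       ∃ L' ∈ {L : Set α | (∃ v ∈ V, L = {w | w ∈ V ∧ M v w ∧ M w v}) ∨
                            ∃ u ∈ U, L = {u}},
        (∀ a ∈ L, ∀ b ∈ L', M a b) ∧ z ∈ L ∧ z' ∈ L' ∧ z' ∈ V)
      ↔ M z z' := by
  intro z z'
  constructor
  · rintro ⟨L, _, L', _, hrel, hz, hz', -⟩
    exact hrel z hz z' hz'
  · intro hM
    obtain ⟨hzU, hz'V⟩ := hdom z z' hM
    rcases hzU with h | h
    · refine ⟨{z}, Or.inr ⟨z, h, rfl⟩,
        {w | w ∈ V ∧ M z' w ∧ M w z'}, Or.inl ⟨z', hz'V, rfl⟩, ?_,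
        rfl, ⟨hz'V, hrefl z' hz'V, hrefl z' hz'V⟩, hz'V⟩
      rintro a rfl b ⟨-, hb, -⟩
      exact htrans _ _ _ hM hb
    · refine ⟨{w | w ∈ V ∧ M z w ∧ M w z}, Or.inl ⟨z, h, rfl⟩,
        {w | w ∈ V ∧ M z' w ∧ M w z'}, Or.inl ⟨z', hz'V, rfl⟩, ?_,
        ⟨h, hrefl z h, hrefl z h⟩, ⟨hz'V, hrefl z' hz'V, hrefl z' hz'V⟩, hz'V⟩
      rintro a ⟨-, -, ha⟩ b ⟨-, hb, -⟩
      exact htrans _ _ _ (htrans _ _ _ ha hM) hb
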